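/- For all finite sequences s1, s2 over a set X and every subset Y ⊆ X, the set of shuffles of the restrictions equals the restriction of the shuffles: (s1|_Y) ⧢ (s2|_Y) = { s|_Y : s ∈ s1 ⧢ s2 }. -/

import Mathlib

set_option autoImplicit false

namespace WMM

universe u v

/-! ### Memory actions and events -/

inductive MemAct (Var Val : Type) : Type where
  | write (x : Var) (v : Val)
  | read (x : Var) (v : Val)
  | rmw (x : Var) (vold vnew : Val)
  | fence

structure MemEv (Proc Var Val : Type) : Type where
  proc : Proc
  act : MemAct Var Val

section Mem

variable {Proc Var Val : Type}

def MemEv.isWrite (e : MemEv Proc Var Val) : Prop := ∃ x v, e.act = MemAct.write x v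
def MemEv.isRead (e : MemEv Proc Var Val) : Prop := ∃ x v, e.act = MemAct.read x v
def MemEv.isRMW (e : MemEv Proc Var Val) : Prop := ∃ x v w, e.act = MemAct.rmw x v w
def MemEv.isFence (e : MemEv Proc Var Val) : Prop := e.act = MemAct.fence

/-- The set of processes appearing in an observable memory sequence. -/
def memProcs (σ : List (MemEv Proc Var Val)) : Set Proc := {p | ∃ e ∈ σ, MemEv.proc e = p}

end Mem

/-! ### Shuffles -/

/-- `Shuffle s1 s2 s` means `s` is an interleaving of `s1` and `s2`. -/
inductive Shuffle {α : Type u} : List α → List α → List α → Prop where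
  | nil : Shuffle [] [] []
  | left {s1 s2 s : List α} (x : α) : Shuffle s1 s2 s → Shuffle (s1 ++ [x]) s2 (s ++ [x])
  | right {s1 s2 s : List α} (x : α) : Shuffle s1 s2 s → Shuffle s1 (s2 ++ [x]) (s ++ [x])

/-! ### Paths of a labeled transition relation -/

inductive LTSPath {S : Type u} {L : Type v} (step : S → L → S → Prop) : S → List L → S → Prop where
  | nil (s : S) : LTSPath step s [] s
  | cons {s s' s'' : S} {l : L} {ls : List L} :
      step s l s' → LTSPath step s' ls s'' → LTSPath step s (l :: ls) s''

/-! ### Memory models -/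

/-- A memory model: an LTS whose labels are memory events or the silent label `τ = none`. -/
structure MemModel (Proc Var Val : Type) : Type 1 where
  State : Type
  init : State
  step : State → Option (MemEv Proc Var Val) → State → Prop

section MemModel

variable {Proc Var Val : Type}

/-- A state is stable if no silent (`τ`) transition is enabled. -/
def MemModel.Stable (M : MemModel Proc Var Val) (q : M.State) : Prop :=
  ∀ q', ¬ M.step q none q'

/-- Observable memory sequences from a state: traces with `τ` steps erased. -/
def MemModel.OTraces (M : MemModel Proc Var Val) (q : M.State) :
    Set (List (MemEv Proc Var Val)) :=
  {σ | ∃ (π : List (Option (MemEv Proc Var Val))) (q' : M.State),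
      LTSPath M.step q π q' ∧ π.reduceOption = σ}

def WeaklyMergeable (M : MemModel Proc Var Val) (σ1 σ2 : List (MemEv Proc Var Val)) : Prop :=
  ∀ q0 : M.State, M.Stable q0 → σ1 ∈ M.OTraces q0 → σ2 ∈ M.OTraces q0 →
    ∃ σ, Shuffle σ1 σ2 σ ∧ σ ∈ M.OTraces q0

def StronglyMergeable (M : MemModel Proc Var Val) (σ1 σ2 : List (MemEv Proc Var Val)) : Prop :=
  ∀ q0 : M.State, M.Stable q0 → σ1 ∈ M.OTraces q0 → σ2 ∈ M.OTraces q0 →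
    ∀ σ, Shuffle σ1 σ2 σ → σ ∈ M.OTraces q0

/-- Weak/strong mergeability, selected by a Boolean flag. -/
def MemMergeable (strong : Bool) (M : MemModel Proc Var Val)
    (σ1 σ2 : List (MemEv Proc Var Val)) : Prop :=
  if strong then StronglyMergeable M σ1 σ2 else WeaklyMergeable M σ1 σ2

end MemModel

/-! ### The SCM, TSO and RA memory models -/

section Models

variable (Proc Var Val : Type)

inductive SCMStep [DecidableEq Var] :
    (Var → Val) → Option (MemEv Proc Var Val) → (Var → Val) → Prop where
  | write (m : Var → Val) (p : Proc) (x : Var) (v : Val) :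
      SCMStep m (some ⟨p, MemAct.write x v⟩) (Function.update m x v)
  | read (m : Var → Val) (p : Proc) (x : Var) :
      SCMStep m (some ⟨p, MemAct.read x (m x)⟩) m
  | rmw (m : Var → Val) (p : Proc) (x : Var) (vnew : Val) :
      SCMStep m (some ⟨p, MemAct.rmw x (m x) vnew⟩) (Function.update m x vnew)
  | fence (m : Var → Val) (p : Proc) :
      SCMStep m (some ⟨p, MemAct.fence⟩) m

def SCMModel [DecidableEq Var] [Zero Val] : MemModel Proc Var Val where
  State := Var → Val
  init := fun _ => 0
  step := SCMStep Proc Var Val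

inductive TSOStep [DecidableEq Proc] [DecidableEq Var] :
    (Var → Val) × (Proc → List (Var × Val)) → Option (MemEv Proc Var Val) →
      (Var → Val) × (Proc → List (Var × Val)) → Prop where
  | write (m : Var → Val) (b : Proc → List (Var × Val)) (p : Proc) (x : Var) (v : Val) :
      TSOStep (m, b) (some ⟨p, MemAct.write x v⟩)
        (m, Function.update b p (b p ++ [(x, v)]))
  | readBuffer (m : Var → Val) (b : Proc → List (Var × Val)) (p : Proc) (x : Var) (v : Val) :
      ((b p).filter (fun pr => decide (pr.1 = x))).getLast? = some (x, v) →
      TSOStep (m, b) (some ⟨p, MemAct.read x v⟩) (m, b)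
  | readMemory (m : Var → Val) (b : Proc → List (Var × Val)) (p : Proc) (x : Var) :
      (b p).filter (fun pr => decide (pr.1 = x)) = [] →
      TSOStep (m, b) (some ⟨p, MemAct.read x (m x)⟩) (m, b)
  | rmw (m : Var → Val) (b : Proc → List (Var × Val)) (p : Proc) (x : Var) (vnew : Val) :
      b p = [] →
      TSOStep (m, b) (some ⟨p, MemAct.rmw x (m x) vnew⟩) (Function.update m x vnew, b)
  | fence (m : Var → Val) (b : Proc → List (Var × Val)) (p : Proc) :
      b p = [] → TSOStep (m, b) (some ⟨p, MemAct.fence⟩) (m, b)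
  | propagate (m : Var → Val) (b : Proc → List (Var × Val)) (p : Proc) (x : Var) (v : Val)
      (β : List (Var × Val)) :
      b p = (x, v) :: β →
      TSOStep (m, b) none (Function.update m x v, Function.update b p β)

def TSOModel [DecidableEq Proc] [DecidableEq Var] [Zero Val] : MemModel Proc Var Val where
  State := (Var → Val) × (Proc → List (Var × Val))
  init := (fun _ => 0, fun _ => [])
  step := TSOStep Proc Var Val

/-- A message of the RA memory model. -/
structure RAMsg (Var Val : Type) : Type where
  var : Var
  val : Val
  time : ℕ
  view : Var → ℕ

structure RAState (Proc Var Val : Type) : Type where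
  mem : Set (RAMsg Var Val)
  view : Proc → Var → ℕ
  fview : Var → ℕ

end Models

/-- Pointwise join (maximum) of two views. -/
def viewJoin {Var : Type} (V1 V2 : Var → ℕ) : Var → ℕ := fun y => max (V1 y) (V2 y)

section RA

variable (Proc Var Val : Type)

inductive RAStep [DecidableEq Proc] [DecidableEq Var] :
    RAState Proc Var Val → Option (MemEv Proc Var Val) → RAState Proc Var Val → Prop where
  | write (s : RAState Proc Var Val) (p : Proc) (x : Var) (v : Val) (t : ℕ) :
      s.view p x < t →
      (∀ μ ∈ s.mem, μ.var = x → μ.time ≠ t) →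
      RAStep s (some ⟨p, MemAct.write x v⟩)
        ⟨insert ⟨x, v, t, Function.update (s.view p) x t⟩ s.mem,
         Function.update s.view p (Function.update (s.view p) x t), s.fview⟩
  | read (s : RAState Proc Var Val) (p : Proc) (x : Var) (v : Val) (V : Var → ℕ) :
      (⟨x, v, s.view p x, V⟩ : RAMsg Var Val) ∈ s.mem →
      RAStep s (some ⟨p, MemAct.read x v⟩) s
  | rmw (s : RAState Proc Var Val) (p : Proc) (x : Var) (vexp vnew : Val) (V : Var → ℕ) :
      (⟨x, vexp, s.view p x, V⟩ : RAMsg Var Val) ∈ s.mem →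
      (∀ μ ∈ s.mem, μ.var = x → μ.time ≠ s.view p x + 1) →
      RAStep s (some ⟨p, MemAct.rmw x vexp vnew⟩)
        ⟨insert ⟨x, vnew, s.view p x + 1, Function.update (s.view p) x (s.view p x + 1)⟩ s.mem,
         Function.update s.view p (Function.update (s.view p) x (s.view p x + 1)), s.fview⟩
  | fence (s : RAState Proc Var Val) (p : Proc) :
      RAStep s (some ⟨p, MemAct.fence⟩)
        ⟨s.mem, Function.update s.view p (viewJoin (s.view p) s.fview),
         viewJoin (s.view p) s.fview⟩
  | propagate (s : RAState Proc Var Val) (p : Proc) (μ : RAMsg Var Val) :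
      μ ∈ s.mem → s.view p μ.var < μ.time →
      RAStep s none
        ⟨s.mem, Function.update s.view p (viewJoin (s.view p) μ.view), s.fview⟩

def RAModel [DecidableEq Proc] [DecidableEq Var] [Zero Val] : MemModel Proc Var Val where
  State := RAState Proc Var Val
  init := ⟨{μ | ∃ x : Var, μ = ⟨x, 0, 0, fun _ => 0⟩}, fun _ _ => 0, fun _ => 0⟩
  step := RAStep Proc Var Val

end RA

/-! ### Well-behaved memory models -/

section WellBehaved

variable {Proc Var Val : Type}

/-- Reachability by silent steps. -/
def TauReach (M : MemModel Proc Var Val) : M.State → M.State → Prop :=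
  Relation.ReflTransGen (fun q q' => M.step q none q')

/-- A memory model is well-behaved if there is a simulation from SCM into its stable states. -/
def WellBehaved [DecidableEq Var] [Zero Val] (M : MemModel Proc Var Val) : Prop :=
  ∃ R : (Var → Val) → M.State → Prop,
    (∀ m q, R m q → M.Stable q) ∧
    R (fun _ => (0 : Val)) M.init ∧
    (∀ m q, R m q → ∀ (l : Option (MemEv Proc Var Val)) (m' : Var → Val),
      SCMStep Proc Var Val m l m' →
      ∃ q1 q' : M.State, M.step q l q1 ∧ TauReach M q1 q' ∧ M.Stable q' ∧ R m' q')

end WellBehaved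

/-! ### Patterns of observable memory sequences -/

section Patterns

variable {Proc Var Val : Type}

def IsSolo (σ : List (MemEv Proc Var Val)) : Prop :=
  ∀ e ∈ σ, ∀ e' ∈ σ, MemEv.proc e = MemEv.proc e'

def IsRW (σ : List (MemEv Proc Var Val)) : Prop :=
  ∀ e ∈ σ, MemEv.isWrite e ∨ MemEv.isRead e

def IsRWF (σ : List (MemEv Proc Var Val)) : Prop :=
  ∀ e ∈ σ, MemEv.isWrite e ∨ MemEv.isRead e ∨ MemEv.isFence e

/-- Read-before-write: no read-after-write pattern on distinct variables. -/
def IsRBW (σ : List (MemEv Proc Var Val)) : Prop :=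
  ∀ (k1 k2 : ℕ) (e1 e2 : MemEv Proc Var Val) (x y : Var) (v w : Val),
    k1 < k2 → σ[k1]? = some e1 → σ[k2]? = some e2 →
    e1.act = MemAct.write x v → e2.act = MemAct.read y w → x ≠ y →
    ∃ (k : ℕ) (e : MemEv Proc Var Val) (u : Val),
      k1 < k ∧ k < k2 ∧ σ[k]? = some e ∧ e.act = MemAct.write y u

/-- Trailing-fence: no fence is immediately followed by a non-fence event. -/
def IsTF (σ : List (MemEv Proc Var Val)) : Prop :=
  ∀ (k : ℕ) (e e' : MemEv Proc Var Val),
    σ[k]? = some e → σ[k + 1]? = some e' → MemEv.isFence e → MemEv.isFence e'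

/-- Leading-fence: no fence is immediately preceded by a non-fence event. -/
def IsLF (σ : List (MemEv Proc Var Val)) : Prop :=
  ∀ (k : ℕ) (e e' : MemEv Proc Var Val),
    σ[k]? = some e → σ[k + 1]? = some e' → MemEv.isFence e' → MemEv.isFence e

def IsLTF (σ : List (MemEv Proc Var Val)) : Prop :=
  ∃ σ' σ'' : List (MemEv Proc Var Val), σ = σ' ++ σ'' ∧ IsLF σ' ∧ IsTF σ''

def IsPPTF [DecidableEq Proc] (σ : List (MemEv Proc Var Val)) : Prop :=
  ∀ p : Proc, IsTF (σ.filter (fun e => decide (e.proc = p)))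

def IsPPLF [DecidableEq Proc] (σ : List (MemEv Proc Var Val)) : Prop :=
  ∀ p : Proc, IsLF (σ.filter (fun e => decide (e.proc = p)))

end Patterns

/-! ### Objects, events and histories -/

inductive ObjAct (Op Ret : Type) : Type where
  | inv (o : Op)
  | res (u : Ret)

structure ObjEv (Proc Op Ret : Type) : Type where
  proc : Proc
  act : ObjAct Op Ret

inductive EvAct (Var Val Op Ret : Type) : Type where
  | mem (a : MemAct Var Val)
  | inv (o : Op)
  | res (u : Ret)

/-- A general event: a memory event or an object event of some process. -/
structure Ev (Proc Var Val Op Ret : Type) : Type where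
  proc : Proc
  act : EvAct Var Val Op Ret

section Events

variable {Proc Var Val Op Ret : Type}

def ObjAct.isInv : ObjAct Op Ret → Prop
  | ObjAct.inv _ => True
  | _ => False

def ObjAct.isRes : ObjAct Op Ret → Prop
  | ObjAct.res _ => True
  | _ => False

def Ev.toMem : Ev Proc Var Val Op Ret → Option (MemEv Proc Var Val)
  | ⟨p, EvAct.mem a⟩ => some ⟨p, a⟩
  | _ => none

def Ev.toObj : Ev Proc Var Val Op Ret → Option (ObjEv Proc Op Ret)
  | ⟨p, EvAct.inv o⟩ => some ⟨p, ObjAct.inv o⟩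
  | ⟨p, EvAct.res u⟩ => some ⟨p, ObjAct.res u⟩
  | _ => none

/-- Restriction of an event sequence to its memory events. -/
def restrictMem (π : List (Ev Proc Var Val Op Ret)) : List (MemEv Proc Var Val) :=
  π.filterMap Ev.toMem

/-- Restriction of an event sequence to its object events. -/
def restrictObj (π : List (Ev Proc Var Val Op Ret)) : List (ObjEv Proc Op Ret) :=
  π.filterMap Ev.toObj

def procsEv (π : List (Ev Proc Var Val Op Ret)) : Set Proc := {p | ∃ e ∈ π, Ev.proc e = p}

def procsObj (h : List (ObjEv Proc Op Ret)) : Set Proc := {p | ∃ e ∈ h, ObjEv.proc e = p}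

def Ev.isWriteEv (e : Ev Proc Var Val Op Ret) : Prop :=
  ∃ x v, e.act = EvAct.mem (MemAct.write x v)

def Ev.isReadEv (e : Ev Proc Var Val Op Ret) : Prop :=
  ∃ x v, e.act = EvAct.mem (MemAct.read x v)

def Ev.isResEv (e : Ev Proc Var Val Op Ret) : Prop := ∃ u, e.act = EvAct.res u

def Ev.isFenceEv (e : Ev Proc Var Val Op Ret) : Prop := e.act = EvAct.mem MemAct.fence

/-- The two-event history `⟨p : o ⇒ u⟩`. -/
def invres (p : Proc) (o : Op) (u : Ret) : List (ObjEv Proc Op Ret) :=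
  [⟨p, ObjAct.inv o⟩, ⟨p, ObjAct.res u⟩]

/-- Complete sequential histories: concatenations of matching invocation–response pairs. -/
inductive CompleteSeq : List (ObjEv Proc Op Ret) → Prop where
  | nil : CompleteSeq []
  | cons (p : Proc) (o : Op) (u : Ret) {h : List (ObjEv Proc Op Ret)} :
      CompleteSeq h → CompleteSeq (⟨p, ObjAct.inv o⟩ :: ⟨p, ObjAct.res u⟩ :: h)

/-- Sequential histories: prefixes of complete sequential histories. -/
def Sequential (h : List (ObjEv Proc Op Ret)) : Prop :=
  ∃ h' : List (ObjEv Proc Op Ret), CompleteSeq h' ∧ h <+: h'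

def WellFormed [DecidableEq Proc] (h : List (ObjEv Proc Op Ret)) : Prop :=
  ∀ p : Proc, Sequential (h.filter (fun e => decide (e.proc = p)))

/-- Complete histories: well-formed, and each process's restriction is empty or
ends with a response event. -/
def CompleteH [DecidableEq Proc] (h : List (ObjEv Proc Op Ret)) : Prop :=
  WellFormed h ∧
    ∀ p : Proc, h.filter (fun e => decide (e.proc = p)) = [] ∨
      ∃ e : ObjEv Proc Op Ret,
        (h.filter (fun e => decide (e.proc = p))).getLast? = some e ∧ e.act.isRes

end Events

/-! ### Reorderings and linearization -/

/-- `Reorder R s s'` : `s'` is an `R`-reordering of `s`. -/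
def Reorder {α : Type u} (R : α → α → Prop) (s s' : List α) : Prop :=
  ∃ f : Fin s.length ≃ Fin s'.length,
    (∀ i : Fin s.length, s'.get (f i) = s.get i) ∧
    ∀ i j : Fin s.length, i < j → R (s.get i) (s.get j) → f i < f j

section Lin

variable {Proc Var Val Op Ret : Type}

/-- The `sproc` relation on general events: same process. -/
def sprocEv (e1 e2 : Ev Proc Var Val Op Ret) : Prop := e1.proc = e2.proc

/-- The `lin` relation on object events. -/
def linRel (e1 e2 : ObjEv Proc Op Ret) : Prop :=
  e1.proc = e2.proc ∨ (e1.act.isRes ∧ e2.act.isInv)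

/-- `h ⊑ H'`: some history in `H'` linearizes `h`. -/
def LinInto (Spec : Set (List (ObjEv Proc Op Ret))) (h : List (ObjEv Proc Op Ret)) : Prop :=
  ∃ h' ∈ Spec, Reorder linRel h h'

/-- A specification: a prefix-closed set of complete sequential histories. -/
def IsSpec (Spec : Set (List (ObjEv Proc Op Ret))) : Prop :=
  (∀ h ∈ Spec, CompleteSeq h) ∧
  (∀ h ∈ Spec, ∀ h' : List (ObjEv Proc Op Ret), h' <+: h → CompleteSeq h' → h' ∈ Spec)

/-- A deterministic object: no two specification histories have a longest common prefix
ending with an invocation. -/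
def Deterministic (Spec : Set (List (ObjEv Proc Op Ret))) : Prop :=
  ∀ h1 ∈ Spec, ∀ h2 ∈ Spec, ∀ (g : List (ObjEv Proc Op Ret)) (p : Proc) (o : Op),
    (g ++ [⟨p, ObjAct.inv o⟩]) <+: h1 → (g ++ [⟨p, ObjAct.inv o⟩]) <+: h2 →
    ∃ e : ObjEv Proc Op Ret,
      (g ++ [⟨p, ObjAct.inv o⟩, e]) <+: h1 ∧ (g ++ [⟨p, ObjAct.inv o⟩, e]) <+: h2

def WeaklySpecMergeableAfter (Spec : Set (List (ObjEv Proc Op Ret)))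
    (h0 h1 h2 : List (ObjEv Proc Op Ret)) : Prop :=
  LinInto Spec (h0 ++ h1) → LinInto Spec (h0 ++ h2) →
    ∃ h, Shuffle h1 h2 h ∧ LinInto Spec (h0 ++ h)

def StronglySpecMergeableAfter (Spec : Set (List (ObjEv Proc Op Ret)))
    (h0 h1 h2 : List (ObjEv Proc Op Ret)) : Prop :=
  LinInto Spec (h0 ++ h1) → LinInto Spec (h0 ++ h2) →
    ∀ h, Shuffle h1 h2 h → LinInto Spec (h0 ++ h)

def SpecMergeableAfter (strong : Bool) (Spec : Set (List (ObjEv Proc Op Ret)))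
    (h0 h1 h2 : List (ObjEv Proc Op Ret)) : Prop :=
  if strong then StronglySpecMergeableAfter Spec h0 h1 h2
  else WeaklySpecMergeableAfter Spec h0 h1 h2

/-- One-sided non-commutativity. -/
def OneSidedNonComm (Spec : Set (List (ObjEv Proc Op Ret))) (o1 o2 : Op) : Prop :=
  ∃ (h0 : List (ObjEv Proc Op Ret)) (p1 p2 : Proc) (u1 v1 u2 : Ret),
    CompleteSeq h0 ∧ p1 ≠ p2 ∧ u1 ≠ v1 ∧
    h0 ++ invres p1 o1 u1 ∈ Spec ∧
    h0 ++ invres p2 o2 u2 ++ invres p1 o1 v1 ∈ Spec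

/-- Two-sided non-commutativity. -/
def TwoSidedNonComm (Spec : Set (List (ObjEv Proc Op Ret))) (o1 o2 : Op) : Prop :=
  ∃ (h0 : List (ObjEv Proc Op Ret)) (p1 p2 : Proc) (u1 v1 u2 v2 : Ret),
    CompleteSeq h0 ∧ p1 ≠ p2 ∧ u1 ≠ v1 ∧ u2 ≠ v2 ∧
    h0 ++ invres p1 o1 u1 ++ invres p2 o2 v2 ∈ Spec ∧
    h0 ++ invres p2 o2 u2 ++ invres p1 o1 v1 ∈ Spec

end Lin

/-! ### Implementations -/

/-- An implementation of an operation for a process `p`: an LTS labeled by events of `p`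
in which a response event is always the last transition. -/
structure OpImpl (Proc Var Val Op Ret : Type) (p : Proc) : Type 1 where
  State : Type
  init : State
  step : State → Ev Proc Var Val Op Ret → State → Prop
  proc_eq : ∀ q e q', step q e q' → Ev.proc e = p
  res_final : ∀ (q : State) (u : Ret) (q' : State),
    step q ⟨p, EvAct.res u⟩ q' → ∀ e q'', ¬ step q' e q''

section Impl

variable {Proc Var Val Op Ret : Type}

def OpImpl.traces {p : Proc} (Iop : OpImpl Proc Var Val Op Ret p) :
    Set (List (Ev Proc Var Val Op Ret)) :=
  {π | ∃ q : Iop.State, LTSPath Iop.step Iop.init π q}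

/-- An implementation of an object. -/
def Impl (Proc Var Val Op Ret : Type) : Type 1 :=
  (o : Op) → (p : Proc) → OpImpl Proc Var Val Op Ret p

/-- Per-process states of the system induced by an implementation: `none` is idle. -/
def SIPState (I : Impl Proc Var Val Op Ret) (p : Proc) : Type :=
  Option ((o : Op) × (I o p).State)

/-- Per-process transitions of the system induced by an implementation. -/
inductive SIPStep (I : Impl Proc Var Val Op Ret) (p : Proc) :
    SIPState I p → Ev Proc Var Val Op Ret → SIPState I p → Prop where
  | invoke (o : Op) :
      SIPStep I p none ⟨p, EvAct.inv o⟩ (some ⟨o, (I o p).init⟩)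
  | memStep {o : Op} {q q' : (I o p).State} (a : MemAct Var Val) :
      (I o p).step q ⟨p, EvAct.mem a⟩ q' →
      SIPStep I p (some ⟨o, q⟩) ⟨p, EvAct.mem a⟩ (some ⟨o, q'⟩)
  | resStep {o : Op} {q q' : (I o p).State} (u : Ret) :
      (I o p).step q ⟨p, EvAct.res u⟩ q' →
      SIPStep I p (some ⟨o, q⟩) ⟨p, EvAct.res u⟩ none

def SIState (I : Impl Proc Var Val Op Ret) : Type :=
  (p : Proc) → SIPState I p

/-- The system induced by an implementation interleaves the processes. -/
inductive SIStep [DecidableEq Proc] (I : Impl Proc Var Val Op Ret) :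
    SIState I → Ev Proc Var Val Op Ret → SIState I → Prop where
  | mk (s : SIState I) (p : Proc) (e : Ev Proc Var Val Op Ret) (t : SIPState I p) :
      SIPStep I p (s p) e t → SIStep I s e (Function.update s p t)

def ImplTraces [DecidableEq Proc] (I : Impl Proc Var Val Op Ret) :
    Set (List (Ev Proc Var Val Op Ret)) :=
  {π | ∃ s : SIState I, LTSPath (SIStep I) (fun _ => none) π s}

/-- Histories generated by `I` after `π0` under memory model `M`. -/
def GenHist [DecidableEq Proc] (π0 : List (Ev Proc Var Val Op Ret))
    (I : Impl Proc Var Val Op Ret) (M : MemModel Proc Var Val) :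
    Set (List (ObjEv Proc Op Ret)) :=
  {h | ∃ π : List (Ev Proc Var Val Op Ret),
      π0 ++ π ∈ ImplTraces I ∧ restrictObj π = h ∧
      restrictMem (π0 ++ π) ∈ M.OTraces M.init}

/-- Consistency: every complete generated history linearizes into the specification. -/
def Consistent [DecidableEq Proc] (I : Impl Proc Var Val Op Ret)
    (M : MemModel Proc Var Val) (Spec : Set (List (ObjEv Proc Op Ret))) : Prop :=
  ∀ h ∈ GenHist [] I M, CompleteH h → LinInto Spec h

/-- Availability after `h0` w.r.t. `h`. -/
def AvailableAfter [DecidableEq Proc] [DecidableEq Var] [Zero Val]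
    (I : Impl Proc Var Val Op Ret) (h0 h : List (ObjEv Proc Op Ret)) : Prop :=
  ∀ π0 ∈ ImplTraces I,
    restrictMem π0 ∈ (SCMModel Proc Var Val).OTraces (SCMModel Proc Var Val).init →
    restrictObj π0 = h0 →
    h ∈ GenHist π0 I (SCMModel Proc Var Val)

def SpecAvailable [DecidableEq Proc] [DecidableEq Var] [Zero Val]
    (I : Impl Proc Var Val Op Ret) (Spec : Set (List (ObjEv Proc Op Ret))) : Prop :=
  ∀ h0 h : List (ObjEv Proc Op Ret), CompleteSeq h0 → CompleteSeq h →
    h0 ++ h ∈ Spec → AvailableAfter I h0 h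

end Impl

/-! ### Fence insertion -/

section Fence

variable {Proc Var Val Op Ret : Type}

/-- `FenceInsertion π π'` : `π'` is obtained from `π` by inserting fence events. -/
inductive FenceInsertion : List (Ev Proc Var Val Op Ret) → List (Ev Proc Var Val Op Ret) → Prop where
  | nil : FenceInsertion [] []
  | keep (e : Ev Proc Var Val Op Ret) {π π' : List (Ev Proc Var Val Op Ret)} :
      FenceInsertion π π' → FenceInsertion (e :: π) (e :: π')
  | fence (p : Proc) {π π' : List (Ev Proc Var Val Op Ret)} :
      FenceInsertion π π' → FenceInsertion π (⟨p, EvAct.mem MemAct.fence⟩ :: π')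

/-- Every write is separated from every later read or response by a fence. -/
def FencedWrites (π : List (Ev Proc Var Val Op Ret)) : Prop :=
  ∀ (i j : ℕ) (ei ej : Ev Proc Var Val Op Ret),
    i < j → π[i]? = some ei → π[j]? = some ej →
    Ev.isWriteEv ei → (Ev.isReadEv ej ∨ Ev.isResEv ej) →
    ∃ (k : ℕ) (ek : Ev Proc Var Val Op Ret),
      i < k ∧ k < j ∧ π[k]? = some ek ∧ Ev.isFenceEv ek

/-- Histories generated by `I` under `M` (from the initial state). -/
def GeneratedHistories [DecidableEq Proc] (I : Impl Proc Var Val Op Ret)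
    (M : MemModel Proc Var Val) : Set (List (ObjEv Proc Op Ret)) :=
  {h | ∃ π ∈ ImplTraces I, restrictObj π = h ∧ restrictMem π ∈ M.OTraces M.init}

end Fence

/-! ### The snapshot object -/

inductive SnapOp (W : Type) : Type where
  | update (w : W)
  | scan

inductive SnapRet (Proc W : Type) : Type where
  | ack
  | vec (v : Proc → Option W)

section Snapshot

variable {Proc W : Type}

/-- The sequential specification of the single-writer snapshot object, threaded
through the current contents `s`. -/
inductive SnapSpecFrom [DecidableEq Proc] :
    (Proc → Option W) → List (ObjEv Proc (SnapOp W) (SnapRet Proc W)) → Prop where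
  | nil (s : Proc → Option W) : SnapSpecFrom s []
  | update (s : Proc → Option W) (p : Proc) (w : W)
      {h : List (ObjEv Proc (SnapOp W) (SnapRet Proc W))} :
      SnapSpecFrom (Function.update s p (some w)) h →
      SnapSpecFrom s (⟨p, ObjAct.inv (SnapOp.update w)⟩ :: ⟨p, ObjAct.res SnapRet.ack⟩ :: h)
  | scan (s : Proc → Option W) (p : Proc)
      {h : List (ObjEv Proc (SnapOp W) (SnapRet Proc W))} :
      SnapSpecFrom s h →
      SnapSpecFrom s (⟨p, ObjAct.inv SnapOp.scan⟩ :: ⟨p, ObjAct.res (SnapRet.vec s)⟩ :: h)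

def SnapSpec (Proc W : Type) [DecidableEq Proc] :
    Set (List (ObjEv Proc (SnapOp W) (SnapRet Proc W))) :=
  {h | SnapSpecFrom (fun _ => none) h}

end Snapshot

theorem List.exists_eq_append_cons_of_filter_eq_concat {α : Type u} {p : α → Bool}
    {l t : List α} {x : α} (h : l.filter p = t ++ [x]) :
    ∃ a b, l = a ++ x :: b ∧ a.filter p = t ∧ p x ∧ b.filter p = [] := by
  obtain ⟨l₁, l₂, rfl, h₁, h₂⟩ := List.filter_eq_append_iff.1 h
  obtain ⟨c, b, rfl, hc, hx, hb⟩ := List.filter_eq_cons_iff.1 h₂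
  refine ⟨l₁ ++ c, b, by simp, ?_, hx, hb⟩
  simp [List.filter_append, h₁, List.filter_eq_nil_iff.2 hc]

namespace Shuffle

variable {α : Type u} {s1 s2 s : List α}

theorem append_left (h : Shuffle s1 s2 s) (b : List α) : Shuffle (s1 ++ b) s2 (s ++ b) := by
  induction b using List.reverseRecOn with
  | nil => simpa using h
  | append_singleton b x ih => simpa using ih.left x

theorem append_right (h : Shuffle s1 s2 s) (b : List α) : Shuffle s1 (s2 ++ b) (s ++ b) := by
  induction b using List.reverseRecOn with
  | nil => simpa using h
  | append_singleton b x ih => simpa using ih.right x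

theorem append (s1 s2 : List α) : Shuffle s1 s2 (s1 ++ s2) := by
  simpa using (nil.append_left s1).append_right s2

theorem filter (p : α → Bool) (h : Shuffle s1 s2 s) :
    Shuffle (s1.filter p) (s2.filter p) (s.filter p) := by
  induction h with
  | nil => exact nil
  | left x _ ih =>
    cases hx : p x
    · simpa [List.filter_append, hx] using ih
    · simpa [List.filter_append, hx] using ih.left x
  | right x _ ih =>
    cases hx : p x
    · simpa [List.filter_append, hx] using ih
    · simpa [List.filter_append, hx] using ih.right x

/-- Each block of elements rejected by `p` is reinserted right after the accepted element of its
own list that precedes it (blocks at the very start go first). -/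
theorem exists_filter_eq {p : α → Bool} {t1 t2 t : List α} (h : Shuffle t1 t2 t)
    (s1 s2 : List α) (h1 : s1.filter p = t1) (h2 : s2.filter p = t2) :
    ∃ s, Shuffle s1 s2 s ∧ s.filter p = t := by
  induction h generalizing s1 s2 with
  | nil => exact ⟨s1 ++ s2, append s1 s2, by simp [List.filter_append, h1, h2]⟩
  | left x _ ih =>
    obtain ⟨a, b, rfl, ha, hx, hb⟩ := List.exists_eq_append_cons_of_filter_eq_concat h1
    obtain ⟨s, hs, hsp⟩ := ih a s2 ha h2
    exact ⟨s ++ x :: b, by simpa using hs.append_left (x :: b), by simp [hsp, hx, hb]⟩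
  | right x _ ih =>
    obtain ⟨a, b, rfl, ha, hx, hb⟩ := List.exists_eq_append_cons_of_filter_eq_concat h2
    obtain ⟨s, hs, hsp⟩ := ih s1 a h1 ha
    exact ⟨s ++ x :: b, by simpa using hs.append_right (x :: b), by simp [hsp, hx, hb]⟩

end Shuffle

/-- the shuffles of the restrictions equal the restrictions of the
shuffles: `(s1|_Y) ⧢ (s2|_Y) = { s|_Y : s ∈ s1 ⧢ s2 }`. -/
theorem shuffle_restrict {X : Type} (Y : Set X) [DecidablePred (· ∈ Y)]
    (s1 s2 : List X) :
    {t : List X | Shuffle (s1.filter (fun x => decide (x ∈ Y)))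
        (s2.filter (fun x => decide (x ∈ Y))) t}
      = (fun s : List X => s.filter (fun x => decide (x ∈ Y))) '' {s | Shuffle s1 s2 s} := by
  ext t
  constructor
  · exact fun ht => ht.exists_filter_eq s1 s2 rfl rfl
  · rintro ⟨s, hs, rfl⟩
    exact hs.filter _

end WMM
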